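/- arXiv:2307.12677 — 3 statements merged into one kernel-verified Lean document; each statement's English description precedes it below -/
import Mathlib

section
/- Consider the scalar linear test problem u'(t) = λu(t) with λ ∈ ℂ. Given u^n ∈ ℂ, Δt > 0, set z = λΔt and u^{n+1} = (1 + z + z²/2)u^n, and let û(t) = (1 − t²/Δt²)u^n + (t − t²/Δt)·λu^n + (t²/Δt²)·u^{n+1} for t ∈ [0, Δt] be the left-biased quadratic Hermite reconstruction, with residual R(t) = û'(t) − λû(t). Then √Δt · (∫₀^{Δt} |R(t)|² dt)^{1/2} = (1/(2√5))·Δt³·|λ|³·|u^n|. -/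
/-!
Because `u^{n+1} = (1 + z + z²/2) u^n` is exactly the second-order Taylor value, the
Hermite reconstruction collapses to the Taylor polynomial `û(t) = u + tλu + t²λ²u/2`.
Differentiating kills everything except the missing cubic term, so the residual is the
monomial `R(t) = -(λ³u/2) t²`, and `∫₀^{Δt} |R|² = |λ|⁶|u|² Δt⁵ / 20`.
-/

open Complex

/-- The quadratic Taylor polynomial at `0` of the solution `t ↦ e^{λt} u` of `u' = λu`. -/
noncomputable def quadraticTaylor (lam u : ℂ) (t : ℝ) : ℂ :=
  u + (t : ℂ) * (lam * u) + (t : ℂ) ^ 2 * (lam ^ 2 / 2 * u)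

theorem hasDerivAt_quadraticTaylor (lam u : ℂ) (t : ℝ) :
    HasDerivAt (quadraticTaylor lam u) (lam * u + (t : ℂ) * (lam ^ 2 * u)) t := by
  have hid : HasDerivAt (fun s : ℝ => (s : ℂ)) 1 t := (hasDerivAt_id t).ofReal_comp
  have hsq : HasDerivAt (fun s : ℝ => (s : ℂ) ^ 2) (2 * (t : ℂ)) t := by
    simpa using (hasDerivAt_pow 2 (t : ℂ)).comp_ofReal
  refine (((hasDerivAt_const t u).add (hid.mul_const (lam * u))).add
    (hsq.mul_const (lam ^ 2 / 2 * u))).congr_deriv ?_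
  ring

theorem deriv_quadraticTaylor_sub (lam u : ℂ) (t : ℝ) :
    deriv (quadraticTaylor lam u) t - lam * quadraticTaylor lam u t =
      -(lam ^ 3 * u / 2) * (t : ℂ) ^ 2 := by
  rw [(hasDerivAt_quadraticTaylor lam u t).deriv, quadraticTaylor]
  ring

theorem integral_norm_mul_ofReal_pow_sq (c : ℂ) (n : ℕ) (h : ℝ) :
    ∫ t in (0 : ℝ)..h, ‖c * (t : ℂ) ^ n‖ ^ 2 = ‖c‖ ^ 2 * (h ^ (2 * n + 1) / (2 * n + 1)) := by
  have hnorm : ∀ t : ℝ, ‖c * (t : ℂ) ^ n‖ ^ 2 = ‖c‖ ^ 2 * t ^ (2 * n) := fun t => by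
    rw [norm_mul, norm_pow, norm_real, Real.norm_eq_abs, mul_pow, ← pow_mul, pow_mul',
      sq_abs, ← pow_mul]
  simp_rw [hnorm, intervalIntegral.integral_const_mul, integral_pow]
  push_cast
  ring

/-- Scaled `L²` norm of the residual of the left-biased quadratic Hermite
reconstruction of one step of any explicit second-order, two-stage Runge-Kutta
method applied to the linear test problem `u' = λu`. -/
theorem rk22_quadratic_hermite_residual_L2
    (lam : ℂ) (uN : ℂ) (Δt : ℝ) (hΔt : 0 < Δt)
    (z : ℂ) (hz : z = lam * Δt)
    (uN1 : ℂ) (huN1 : uN1 = (1 + z + z ^ 2 / 2) * uN)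
    (uhat : ℝ → ℂ)
    (huhat : ∀ t : ℝ, uhat t =
      ((1 - t ^ 2 / Δt ^ 2 : ℝ) : ℂ) * uN +
      ((t - t ^ 2 / Δt : ℝ) : ℂ) * (lam * uN) +
      ((t ^ 2 / Δt ^ 2 : ℝ) : ℂ) * uN1)
    (R : ℝ → ℂ)
    (hR : ∀ t : ℝ, R t = deriv uhat t - lam * uhat t) :
    Real.sqrt Δt * Real.sqrt (∫ t in (0 : ℝ)..Δt, ‖R t‖ ^ 2) =
      (1 / (2 * Real.sqrt 5)) * Δt ^ 3 * ‖lam‖ ^ 3 * ‖uN‖ := by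
  have hΔ : (Δt : ℂ) ≠ 0 := ofReal_ne_zero.mpr hΔt.ne'
  have huhat_eq : uhat = quadraticTaylor lam uN := funext fun t => by
    rw [huhat, huN1, hz, quadraticTaylor]
    push_cast
    field_simp
    ring
  have hR_eq : ∀ t : ℝ, R t = -(lam ^ 3 * uN / 2) * (t : ℂ) ^ 2 := fun t => by
    rw [hR, huhat_eq, deriv_quadraticTaylor_sub]
  simp_rw [hR_eq, integral_norm_mul_ofReal_pow_sq, ← Real.sqrt_mul hΔt.le]
  rw [← Real.sqrt_sq (by positivity : 0 ≤ 1 / (2 * Real.sqrt 5) * Δt ^ 3 * ‖lam‖ ^ 3 * ‖uN‖)]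
  congr 1
  rw [mul_pow, mul_pow, mul_pow, div_pow, mul_pow, Real.sq_sqrt (by norm_num : (0 : ℝ) ≤ 5),
    norm_neg, norm_div, norm_mul, norm_pow, Complex.norm_two]
  push_cast
  ring
end

section
/- Consider the scalar linear test problem u'(t) = λu(t) with λ ∈ ℂ. Given u^n ∈ ℂ, Δt > 0, set z = λΔt and u^{n+1} = (1 + z + z²/2 + z³/6)u^n (one step of any explicit third-order, three-stage Runge–Kutta method). Let û be the left-biased cubic Hermite reconstruction û(t) = (1 − t³/Δt³)u^n + (t − t³/Δt²)·λu^n + (t²/2 − t³/(2Δt))·λ²u^n + (t³/Δt³)·u^{n+1} for t ∈ [0, Δt], with residual R(t) = û'(t) − λû(t). Then |R(t)| = (1/6)·t³·|λ|⁴·|u^n| for all t ∈ [0, Δt], and consequently ∫₀^{Δt} |R(t)| dt = (1/24)·Δt⁴·|λ|⁴·|u^n|. -/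
/-!
Every explicit three-stage third-order Runge–Kutta step maps `uⁿ` to `p(Δt)`, where
`p(t) = Σ_{k ≤ 3} (λt)ᵏ/k! · uⁿ` is the cubic Taylor polynomial of the exact solution. The
left-biased Hermite data (`p(0)`, `p'(0)`, `p''(0)`, `p(Δt)`) are therefore those of the cubic `p`,
and Hermite interpolation reproduces cubics, so `û = p`. For Taylor polynomials of `e^{λt}` the
residual telescopes: `p' = λ · (p minus its top term)`, hence `R(t) = -λ (λt)³/3! · uⁿ`.
-/

open Finset Nat

noncomputable def expTaylor (n : ℕ) (lam u : ℂ) (t : ℝ) : ℂ :=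
  ∑ k ∈ range (n + 1), (lam * t) ^ k / k ! * u

theorem hasDerivAt_expTaylor_succ (n : ℕ) (lam u : ℂ) (t : ℝ) :
    HasDerivAt (expTaylor (n + 1) lam u) (lam * expTaylor n lam u t) t := by
  have hterm (k : ℕ) : HasDerivAt (fun s : ℝ => (lam * s) ^ (k + 1) / (k + 1)! * u)
      (lam * ((lam * t) ^ k / k ! * u)) t := by
    refine ((((hasDerivAt_id (t : ℂ)).const_mul lam).pow (k + 1)).comp_ofReal.div_const
      ((k + 1)! : ℂ)).mul_const u |>.congr_deriv ?_
    rw [Nat.factorial_succ]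
    push_cast
    field_simp
    simp only [id]
    ring
  have hsplit : expTaylor (n + 1) lam u =
      fun s : ℝ => u + ∑ k ∈ range (n + 1), (lam * s) ^ (k + 1) / (k + 1)! * u := by
    ext s
    rw [expTaylor, sum_range_succ', add_comm]
    simp
  rw [hsplit, expTaylor, mul_sum]
  exact (HasDerivAt.fun_sum fun k _ => hterm k).const_add u

theorem expTaylor_residual (n : ℕ) (lam u : ℂ) (t : ℝ) :
    deriv (expTaylor (n + 1) lam u) t - lam * expTaylor (n + 1) lam u t =
      -(lam * (lam * t) ^ (n + 1) / (n + 1)! * u) := by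
  rw [(hasDerivAt_expTaylor_succ n lam u t).deriv, expTaylor, expTaylor,
    sum_range_succ _ (n + 1)]
  ring

theorem norm_expTaylor_residual (n : ℕ) (lam u : ℂ) (t : ℝ) :
    ‖deriv (expTaylor (n + 1) lam u) t - lam * expTaylor (n + 1) lam u t‖ =
      |t| ^ (n + 1) * ‖lam‖ ^ (n + 2) * ‖u‖ / (n + 1)! := by
  rw [expTaylor_residual]
  simp only [norm_neg, norm_mul, norm_div, norm_pow, Complex.norm_real, Real.norm_eq_abs,
    RCLike.norm_natCast]
  ring

theorem expTaylor_three (lam u : ℂ) (t : ℝ) :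
    expTaylor 3 lam u t =
      u + lam * u * t + lam ^ 2 * u / 2 * t ^ 2 + lam ^ 3 * u / 6 * t ^ 3 := by
  simp only [expTaylor, sum_range_succ, sum_range_zero, Nat.factorial]
  push_cast
  ring

noncomputable def leftCubicHermite (Δt : ℝ) (u₀ d₁ d₂ u₁ : ℂ) (t : ℝ) : ℂ :=
  ((1 - t ^ 3 / Δt ^ 3 : ℝ) : ℂ) * u₀ + ((t - t ^ 3 / Δt ^ 2 : ℝ) : ℂ) * d₁ +
    ((t ^ 2 / 2 - t ^ 3 / (2 * Δt) : ℝ) : ℂ) * d₂ + ((t ^ 3 / Δt ^ 3 : ℝ) : ℂ) * u₁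

theorem leftCubicHermite_cubic {Δt : ℝ} (hΔt : Δt ≠ 0) (c₀ c₁ c₂ c₃ : ℂ) (t : ℝ) :
    leftCubicHermite Δt c₀ c₁ (2 * c₂) (c₀ + c₁ * Δt + c₂ * Δt ^ 2 + c₃ * Δt ^ 3) t =
      c₀ + c₁ * t + c₂ * t ^ 2 + c₃ * t ^ 3 := by
  have : (Δt : ℂ) ≠ 0 := by exact_mod_cast hΔt
  simp only [leftCubicHermite]
  push_cast
  field_simp
  ring

theorem leftCubicHermite_expTaylor_three {Δt : ℝ} (hΔt : Δt ≠ 0) (lam u : ℂ) :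
    leftCubicHermite Δt u (lam * u) (lam ^ 2 * u) (expTaylor 3 lam u Δt) =
      expTaylor 3 lam u := by
  ext t
  have h := leftCubicHermite_cubic hΔt u (lam * u) (lam ^ 2 * u / 2) (lam ^ 3 * u / 6) t
  rw [mul_div_cancel₀ _ two_ne_zero] at h
  rw [expTaylor_three, expTaylor_three, h]

/-- Pointwise residual and its `L¹` norm for the left-biased cubic Hermite
reconstruction of one step of any explicit third-order, three-stage Runge-Kutta
method applied to the linear test problem `u' = λu`. -/
theorem rk33_left_cubic_hermite_residual
    (lam : ℂ) (uN : ℂ) (Δt : ℝ) (hΔt : 0 < Δt)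
    (z : ℂ) (hz : z = lam * Δt)
    (uN1 : ℂ) (huN1 : uN1 = (1 + z + z ^ 2 / 2 + z ^ 3 / 6) * uN)
    (uhat : ℝ → ℂ)
    (huhat : ∀ t : ℝ, uhat t =
      ((1 - t ^ 3 / Δt ^ 3 : ℝ) : ℂ) * uN +
      ((t - t ^ 3 / Δt ^ 2 : ℝ) : ℂ) * (lam * uN) +
      ((t ^ 2 / 2 - t ^ 3 / (2 * Δt) : ℝ) : ℂ) * (lam ^ 2 * uN) +
      ((t ^ 3 / Δt ^ 3 : ℝ) : ℂ) * uN1)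
    (R : ℝ → ℂ)
    (hR : ∀ t : ℝ, R t = deriv uhat t - lam * uhat t) :
    (∀ t ∈ Set.Icc (0 : ℝ) Δt,
      ‖R t‖ = (1 / 6) * t ^ 3 * ‖lam‖ ^ 4 * ‖uN‖) ∧
    (∫ t in (0 : ℝ)..Δt, ‖R t‖) =
      (1 / 24) * Δt ^ 4 * ‖lam‖ ^ 4 * ‖uN‖ := by
  have huN1_taylor : uN1 = expTaylor 3 lam uN Δt := by
    rw [huN1, hz, expTaylor_three]
    ring
  have huhat_taylor : uhat = expTaylor 3 lam uN := by
    rw [← leftCubicHermite_expTaylor_three hΔt.ne', ← huN1_taylor]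
    exact funext huhat
  have hnorm (t : ℝ) (ht : 0 ≤ t) : ‖R t‖ = (1 / 6) * t ^ 3 * ‖lam‖ ^ 4 * ‖uN‖ := by
    rw [hR, huhat_taylor, norm_expTaylor_residual, abs_of_nonneg ht,
      show (2 + 1)! = 6 from rfl]
    push_cast
    ring
  refine ⟨fun t ht => hnorm t ht.1, ?_⟩
  calc (∫ t in (0 : ℝ)..Δt, ‖R t‖)
      = ∫ t in (0 : ℝ)..Δt, (1 / 6) * ‖lam‖ ^ 4 * ‖uN‖ * t ^ 3 :=
        intervalIntegral.integral_congr fun t ht => by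
          rw [hnorm t (Set.uIcc_of_le hΔt.le ▸ ht).1]
          ring
    _ = (1 / 24) * Δt ^ 4 * ‖lam‖ ^ 4 * ‖uN‖ := by
        rw [intervalIntegral.integral_const_mul, integral_pow]
        ring
end

section
/- Consider the scalar linear test problem u'(t) = λu(t) with λ ∈ ℂ. Given u^n ∈ ℂ, Δt > 0, set z = λΔt and u^{n+1} = (1 + z + z²/2 + z³/6)u^n. Let û be the central cubic Hermite reconstruction û(t) = (1 − 3t²/Δt² + 2t³/Δt³)u^n + (t − 2t²/Δt + t³/Δt²)·λu^n + (3t²/Δt² − 2t³/Δt³)·u^{n+1} + (−t²/Δt + t³/Δt²)·λu^{n+1} for t ∈ [0, Δt], with residual R(t) = û'(t) − λû(t). Then for all t ∈ [0, Δt], |R(t)| = (1/6)·t·(Δt − t)·|t − 2Δt + tΔtλ|·|λ|⁴·|u^n|. -/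
/-!
The stability function is the cubic Taylor polynomial of `exp z`, so the Taylor cubic
`T(t) = (1 + λt + λ²t²/2 + λ³t³/6) uⁿ` matches all Hermite data except the slope at `Δt`, which
it misses by `λ⁴Δt³uⁿ/6`. Hence `û - T` is a multiple of `λ⁴uⁿ`, and so is the residual
(that of `T` is `-λ⁴t³uⁿ/6`). The residual vanishes at `t = 0` and `t = Δt`, where `û` has the
exact slopes, leaving the linear factor `t - 2Δt + tΔtλ`; on `[0, Δt]` the real factor
`t (Δt - t) / 6` is nonnegative.
-/

open Complex

noncomputable def hermiteCubic (h : ℝ) (u₀ m₀ u₁ m₁ : ℂ) (t : ℝ) : ℂ :=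
  ((1 - 3 * t ^ 2 / h ^ 2 + 2 * t ^ 3 / h ^ 3 : ℝ) : ℂ) * u₀ +
    ((t - 2 * t ^ 2 / h + t ^ 3 / h ^ 2 : ℝ) : ℂ) * m₀ +
    ((3 * t ^ 2 / h ^ 2 - 2 * t ^ 3 / h ^ 3 : ℝ) : ℂ) * u₁ +
    ((-(t ^ 2) / h + t ^ 3 / h ^ 2 : ℝ) : ℂ) * m₁

/-- The stability function shared by all explicit three-stage third-order Runge–Kutta methods. -/
noncomputable def rk3Stability (z : ℂ) : ℂ := 1 + z + z ^ 2 / 2 + z ^ 3 / 6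

theorem hasDerivAt_real_cubic (a b c d t : ℝ) :
    HasDerivAt (fun x : ℝ => a + b * x + c * x ^ 2 + d * x ^ 3)
      (b + 2 * c * t + 3 * d * t ^ 2) t := by
  have h := (((hasDerivAt_const t a).add ((hasDerivAt_id t).const_mul b)).add
    ((hasDerivAt_pow 2 t).const_mul c)).add ((hasDerivAt_pow 3 t).const_mul d)
  exact h.congr_deriv (by norm_num; ring)

theorem hasDerivAt_hermiteCubic (h : ℝ) (u₀ m₀ u₁ m₁ : ℂ) (t : ℝ) :
    HasDerivAt (hermiteCubic h u₀ m₀ u₁ m₁)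
      (((-6 * t / h ^ 2 + 6 * t ^ 2 / h ^ 3 : ℝ) : ℂ) * u₀ +
        ((1 - 4 * t / h + 3 * t ^ 2 / h ^ 2 : ℝ) : ℂ) * m₀ +
        ((6 * t / h ^ 2 - 6 * t ^ 2 / h ^ 3 : ℝ) : ℂ) * u₁ +
        ((-2 * t / h + 3 * t ^ 2 / h ^ 2 : ℝ) : ℂ) * m₁) t := by
  have basis (f : ℝ → ℝ) (f' a b c d : ℝ) (hf : ∀ x, f x = a + b * x + c * x ^ 2 + d * x ^ 3)
      (hf' : f' = b + 2 * c * t + 3 * d * t ^ 2) (w : ℂ) :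
      HasDerivAt (fun x => (f x : ℂ) * w) ((f' : ℂ) * w) t := by
    rw [funext hf, hf']
    exact (hasDerivAt_real_cubic a b c d t).ofReal_comp.mul_const w
  exact (((basis _ _ 1 0 (-3 / h ^ 2) (2 / h ^ 3) (fun x => by ring) (by ring) u₀).add
    (basis _ _ 0 1 (-2 / h) (1 / h ^ 2) (fun x => by ring) (by ring) m₀)).add
    (basis _ _ 0 0 (3 / h ^ 2) (-2 / h ^ 3) (fun x => by ring) (by ring) u₁)).add
    (basis _ _ 0 0 (-1 / h) (1 / h ^ 2) (fun x => by ring) (by ring) m₁)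

theorem hermiteCubic_rk3_residual {h : ℝ} (hh : h ≠ 0) (lam u₀ : ℂ) {u₁ : ℂ}
    (hu₁ : u₁ = rk3Stability (lam * h) * u₀) (t : ℝ) :
    deriv (hermiteCubic h u₀ (lam * u₀) u₁ (lam * u₁)) t -
        lam * hermiteCubic h u₀ (lam * u₀) u₁ (lam * u₁) t =
      ((t * (h - t) / 6 : ℝ) : ℂ) * (t - 2 * h + t * h * lam) * lam ^ 4 * u₀ := by
  have hh' : (h : ℂ) ≠ 0 := ofReal_ne_zero.mpr hh
  simp only [(hasDerivAt_hermiteCubic _ _ _ _ _ t).deriv, hermiteCubic, hu₁, rk3Stability]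
  push_cast
  field_simp
  ring

theorem norm_hermiteCubic_rk3_residual {h : ℝ} (hh : h ≠ 0) (lam u₀ : ℂ) {u₁ : ℂ}
    (hu₁ : u₁ = rk3Stability (lam * h) * u₀) {t : ℝ} (ht : t ∈ Set.Icc 0 h) :
    ‖deriv (hermiteCubic h u₀ (lam * u₀) u₁ (lam * u₁)) t -
        lam * hermiteCubic h u₀ (lam * u₀) u₁ (lam * u₁) t‖ =
      t * (h - t) / 6 * ‖(t : ℂ) - 2 * h + t * h * lam‖ * ‖lam‖ ^ 4 * ‖u₀‖ := by
  have hnonneg : 0 ≤ t * (h - t) / 6 :=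
    div_nonneg (mul_nonneg ht.1 (sub_nonneg.mpr ht.2)) (by norm_num)
  rw [hermiteCubic_rk3_residual hh lam u₀ hu₁, norm_mul, norm_mul, norm_mul, norm_pow, norm_real,
    Real.norm_of_nonneg hnonneg]

/-- Pointwise residual of the central cubic Hermite reconstruction of one step of
any explicit third-order, three-stage Runge-Kutta method applied to the linear
test problem `u' = λu`. -/
theorem rk33_central_cubic_hermite_residual_pointwise
    (lam : ℂ) (uN : ℂ) (Δt : ℝ) (hΔt : 0 < Δt)
    (z : ℂ) (hz : z = lam * Δt)
    (uN1 : ℂ) (huN1 : uN1 = (1 + z + z ^ 2 / 2 + z ^ 3 / 6) * uN)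
    (uhat : ℝ → ℂ)
    (huhat : ∀ t : ℝ, uhat t =
      ((1 - 3 * t ^ 2 / Δt ^ 2 + 2 * t ^ 3 / Δt ^ 3 : ℝ) : ℂ) * uN +
      ((t - 2 * t ^ 2 / Δt + t ^ 3 / Δt ^ 2 : ℝ) : ℂ) * (lam * uN) +
      ((3 * t ^ 2 / Δt ^ 2 - 2 * t ^ 3 / Δt ^ 3 : ℝ) : ℂ) * uN1 +
      ((-(t ^ 2) / Δt + t ^ 3 / Δt ^ 2 : ℝ) : ℂ) * (lam * uN1))
    (R : ℝ → ℂ)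
    (hR : ∀ t : ℝ, R t = deriv uhat t - lam * uhat t) :
    ∀ t ∈ Set.Icc (0 : ℝ) Δt,
      ‖R t‖ =
        (1 / 6) * t * (Δt - t) * ‖(t : ℂ) - 2 * Δt + t * Δt * lam‖ *
          ‖lam‖ ^ 4 * ‖uN‖ := by
  have huN1' : uN1 = rk3Stability (lam * Δt) * uN := by rw [huN1, hz, rk3Stability]
  have huhat' : uhat = hermiteCubic Δt uN (lam * uN) uN1 (lam * uN1) := funext huhat
  intro t ht
  rw [hR, huhat', norm_hermiteCubic_rk3_residual hΔt.ne' lam uN huN1' ht]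
  ring
end
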